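/- In the k-binomial transform, incrementing the total element count from t to t+1 triggers a merge of components 1 through j where j is the largest index such that the representation satisfies D_1+1 = D_2, D_2+1 = D_3, ..., D_{j−1}+1 = D_j after incrementing D_1; the resulting representation with D_1' = 0, ..., D_{j−1}' = j−2 reassigned to i−1 for i < j and D_j' = D_{j−1}+1 is the unique k-binomial representation of t+1. -/

import Mathlib

/-!
Incrementing `D j` by one and emptying the components below `j` adds exactly one to the sum:
the old components `0, …, j` are `C(d + i, i + 1)`, and by the hockey-stick identity
`∑_{i ≤ j} C(d + i, i + 1) + 1 = C(d + j + 1, j + 1)`, the new `j`-th component, while the new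
components below `j` are `C(i, i + 1) = 0`. Monotonicity survives because the new sequence
lies below `D` away from `j`, and `D j + 1 < D i` past `j` by maximality of the cascade.
-/

open Finset

theorem Nat.sum_range_add_choose_succ_add_one (d : ℕ) :
    ∀ n : ℕ, ∑ i ∈ range n, (d + i).choose (i + 1) + 1 = (d + n).choose n
  | 0 => by simp
  | n + 1 => by
    rw [sum_range_succ, add_right_comm, Nat.sum_range_add_choose_succ_add_one d n,
      ← Nat.add_assoc, Nat.choose_succ_succ']

theorem Finset.sum_Iic_add_sum_Ioi {α M : Type*} [LinearOrder α] [Fintype α]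
    [LocallyFiniteOrderBot α] [LocallyFiniteOrderTop α] [AddCommMonoid M] (f : α → M) (a : α) :
    ∑ i ∈ Iic a, f i + ∑ i ∈ Ioi a, f i = ∑ i, f i := by
  rw [← sum_union (Finset.disjoint_left.mpr fun i hi hi' =>
    (mem_Iic.mp hi).not_gt (mem_Ioi.mp hi'))]
  exact sum_congr (by ext i; simp [le_or_gt]) fun _ _ => rfl

section MergeCascade

variable {k : ℕ}

def mergeCascade (D : Fin k → ℕ) (j : Fin k) : Fin k → ℕ :=
  fun i => if i < j then (i : ℕ) else if i = j then D j + 1 else D i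

variable {D : Fin k → ℕ} {i j : Fin k}

theorem mergeCascade_of_lt (h : i < j) : mergeCascade D j i = i := if_pos h

@[simp]
theorem mergeCascade_self : mergeCascade D j j = D j + 1 := by
  simp [mergeCascade]

theorem mergeCascade_of_gt (h : j < i) : mergeCascade D j i = D i := by
  simp [mergeCascade, h.not_gt, h.ne']

theorem mergeCascade_le (hle : ∀ i < j, (i : ℕ) ≤ D i) (h : i ≠ j) :
    mergeCascade D j i ≤ D i := by
  rcases h.lt_or_gt with h | h
  · exact (mergeCascade_of_lt h).trans_le (hle i h)
  · exact (mergeCascade_of_gt h).le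

theorem strictMono_mergeCascade (hmono : StrictMono D) (hle : ∀ i < j, (i : ℕ) ≤ D i)
    (hmax : ∀ i, j < i → D j + 1 < D i) : StrictMono (mergeCascade D j) := by
  intro a b hab
  rcases lt_trichotomy b j with hb | rfl | hb
  · rw [mergeCascade_of_lt (hab.trans hb), mergeCascade_of_lt hb]
    exact hab
  · rw [mergeCascade_self]
    exact Nat.lt_succ_of_le ((mergeCascade_le hle hab.ne).trans (hmono hab).le)
  · rw [mergeCascade_of_gt hb]
    rcases eq_or_ne a j with rfl | ha
    · exact mergeCascade_self.trans_lt (hmax b hb)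
    · exact (mergeCascade_le hle ha).trans_lt (hmono hab)

theorem sum_Iic_choose_mergeCascade :
    ∑ i ∈ Iic j, (mergeCascade D j i).choose (i + 1) = (D j + 1).choose (j + 1) := by
  rw [sum_eq_single_of_mem j (mem_Iic.mpr le_rfl), mergeCascade_self]
  intro i hi hij
  rw [mergeCascade_of_lt (lt_of_le_of_ne (mem_Iic.mp hi) hij)]
  exact Nat.choose_eq_zero_of_lt (Nat.lt_succ_self i)

theorem sum_Iic_choose_add_one {d : ℕ} (hcasc : ∀ i ≤ j, D i = d + i) :
    ∑ i ∈ Iic j, (D i).choose (i + 1) + 1 = (D j + 1).choose (j + 1) := by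
  have hval : ∑ i ∈ Iic j, (D i).choose (i + 1) =
      ∑ i ∈ range (j + 1), (d + i).choose (i + 1) := by
    rw [Nat.range_succ_eq_Iic, ← Fin.map_valEmbedding_Iic, sum_map]
    exact sum_congr rfl fun i hi => by rw [hcasc i (mem_Iic.mp hi), Fin.valEmbedding_apply]
  rw [hval, Nat.sum_range_add_choose_succ_add_one, hcasc j le_rfl, Nat.add_assoc]

theorem sum_choose_mergeCascade {d : ℕ} (hcasc : ∀ i ≤ j, D i = d + i) :
    ∑ i, (mergeCascade D j i).choose (i + 1) = ∑ i, (D i).choose (i + 1) + 1 := by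
  have hsame : ∑ i ∈ Ioi j, (mergeCascade D j i).choose (i + 1) =
      ∑ i ∈ Ioi j, (D i).choose (i + 1) :=
    sum_congr rfl fun i hi => by rw [mergeCascade_of_gt (mem_Ioi.mp hi)]
  rw [← sum_Iic_add_sum_Ioi _ j, ← sum_Iic_add_sum_Ioi _ j, hsame, sum_Iic_choose_mergeCascade,
    ← sum_Iic_choose_add_one hcasc, add_right_comm]

end MergeCascade

/-- k-binomial transform increment: if the representation of t has a maximal cascade
D_i = D_1 + (i−1) for i ≤ j (1-indexed; here 0-indexed D i = d + i for i ≤ j), and the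
cascade stops at j (D j + 1 < D i for i > j), then reassigning D'_i = i−1 for i < j,
D'_j = D_j + 1, D'_i = D_i for i > j yields a strictly increasing sequence whose
k-binomial sum is t + 1, i.e. the unique k-binomial representation of t+1. -/
theorem k_binomial_increment (k : ℕ) (D : Fin k → ℕ) (j : Fin k) (d : ℕ)
    (hmono : StrictMono D)
    (hcasc : ∀ i : Fin k, i ≤ j → D i = d + (i : ℕ))
    (hmax : ∀ i : Fin k, j < i → D j + 1 < D i) :
    StrictMono (fun i : Fin k =>
        if i < j then (i : ℕ) else if i = j then D j + 1 else D i) ∧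
    (∑ i : Fin k,
        (if i < j then (i : ℕ) else if i = j then D j + 1 else D i).choose ((i : ℕ) + 1)) =
      (∑ i : Fin k, (D i).choose ((i : ℕ) + 1)) + 1 := by
  have hle : ∀ i < j, (i : ℕ) ≤ D i := fun i hi => by
    rw [hcasc i hi.le]
    exact Nat.le_add_left _ _
  exact ⟨strictMono_mergeCascade hmono hle hmax, sum_choose_mergeCascade hcasc⟩
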